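/- Let T ∈ 𝕋 with non-pendant vertices v_1, ..., v_k, where v_i is adjacent to t_i pendant vertices. Then in the group inverse graph T#, the degree of v_i equals t_i. -/

import Mathlib

open SimpleGraph

/-- `X` is the group inverse of `A`. -/
def IsGroupInverse {n : Type*} [Fintype n] (A X : Matrix n n ℝ) : Prop :=
  A * X * A = A ∧ X * A * X = X ∧ A * X = X * A

/-- A matching of a graph: a set of pairwise non-incident edges. -/
def IsMatching {V : Type*} (G : SimpleGraph V) (M : Finset (Sym2 V)) : Prop :=
  (↑M : Set (Sym2 V)) ⊆ G.edgeSet ∧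
    ∀ e ∈ M, ∀ f ∈ M, e ≠ f → ∀ v : V, ¬(v ∈ e ∧ v ∈ f)

/-- A maximum matching: a matching of maximum cardinality. -/
def IsMaxMatching {V : Type*} (G : SimpleGraph V) (M : Finset (Sym2 V)) : Prop :=
  IsMatching G M ∧ ∀ N : Finset (Sym2 V), IsMatching G N → N.card ≤ M.card

/-- A nonempty list of edges alternately in and out of `M`,
beginning and ending with edges of `M`. -/
def IsAltEdgeList {V : Type*} (M : Set (Sym2 V)) : List (Sym2 V) → Prop
  | [] => False
  | [e] => e ∈ M
  | e :: f :: rest => e ∈ M ∧ f ∉ M ∧ IsAltEdgeList M rest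

/-- A pair of vertices is maximally matchable if they are joined by a path that is
alternating with respect to some maximum matching. -/
def MaxMatchable {V : Type*} (G : SimpleGraph V) (u v : V) : Prop :=
  ∃ (p : G.Walk u v) (M : Finset (Sym2 V)),
    p.IsPath ∧ IsMaxMatching G M ∧ IsAltEdgeList (↑M) p.edges

/-- `G` is a star: some center `c` is adjacent to exactly the other vertices,
and there are no other edges. -/
def IsStar {V : Type*} (G : SimpleGraph V) : Prop :=
  ∃ c : V, ∀ u v : V, G.Adj u v ↔ ((u = c ∧ v ≠ c) ∨ (v = c ∧ u ≠ c))

/-- The class 𝕋: trees with at least one non-pendant vertex in which every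
non-pendant vertex is adjacent to a pendant vertex. -/
def InClassT {V : Type*} [Fintype V] (T : SimpleGraph V) [DecidableRel T.Adj] : Prop :=
  T.IsTree ∧ (∃ v, T.degree v ≠ 1) ∧
    ∀ v, T.degree v ≠ 1 → ∃ u, T.Adj v u ∧ T.degree u = 1

/-- The number of pendant neighbours of `v`. -/
def pendantNbrs {V : Type*} [Fintype V] [DecidableEq V] (T : SimpleGraph V)
    [DecidableRel T.Adj] (v : V) : ℕ :=
  ((T.neighborFinset v).filter fun u => T.degree u = 1).card

/-!
In a maximum matching `M`, a non-pendant vertex `x` cannot be matched to a non-pendant `y`: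
trading `xy` for `xx'`, with `x'` a pendant neighbour of `x`, gives another maximum matching
that leaves `y` and its pendant neighbour `y'` both unmatched although they are adjacent. So an
`M`-alternating path from a non-pendant vertex starts with a matched edge into a pendant vertex,
where it must stop. Conversely every pendant edge lies in some maximum matching, so the
neighbours of `v` in `T#` are exactly its pendant neighbours in `T`.
-/

open SimpleGraph

namespace IsAltEdgeList

variable {V : Type*} {M : Set (Sym2 V)}

lemma head_mem {e : Sym2 V} {l : List (Sym2 V)} (h : IsAltEdgeList M (e :: l)) : e ∈ M := by
  cases l with
  | nil => exact h
  | cons _ _ => exact h.1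

lemma append_pair : ∀ {l : List (Sym2 V)}, IsAltEdgeList M l →
    ∀ {f e : Sym2 V}, f ∉ M → e ∈ M → IsAltEdgeList M (l ++ [f, e])
  | [], h, _, _, _, _ => nomatch h
  | [_], h, _, _, hf, he => ⟨h, hf, he⟩
  | _ :: _ :: _, h, _, _, hf, he => ⟨h.1, h.2.1, append_pair h.2.2 hf he⟩

lemma reverse : ∀ {l : List (Sym2 V)}, IsAltEdgeList M l → IsAltEdgeList M l.reverse
  | [], h => nomatch h
  | [_], h => h
  | _ :: _ :: _, h => by simpa using append_pair (reverse h.2.2) h.2.1 h.1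

end IsAltEdgeList

section Matching

variable {V : Type*} {G : SimpleGraph V} {M N : Finset (Sym2 V)} {e f : Sym2 V} {x u : V}

lemma IsMatching.eq_of_mem (hM : IsMatching G M) (he : e ∈ M) (hf : f ∈ M) (hxe : x ∈ e)
    (hxf : x ∈ f) : e = f :=
  by_contra fun hne => hM.2 e he f hf hne x ⟨hxe, hxf⟩

lemma IsMatching.subset (hM : IsMatching G M) (hNM : N ⊆ M) : IsMatching G N :=
  ⟨(Finset.coe_subset.mpr hNM).trans hM.1, fun e he f hf => hM.2 e (hNM he) f (hNM hf)⟩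

lemma exists_isMaxMatching [Finite V] (G : SimpleGraph V) : ∃ M, IsMaxMatching G M := by
  classical
  have := Fintype.ofFinite V
  obtain ⟨M, hM, hmax⟩ := Finset.exists_max_image
    (Finset.univ.filter fun M : Finset (Sym2 V) => IsMatching G M) Finset.card
    ⟨∅, by simp [IsMatching]⟩
  exact ⟨M, (Finset.mem_filter.mp hM).2,
    fun N hN => hmax N (Finset.mem_filter.mpr ⟨Finset.mem_univ _, hN⟩)⟩

variable [DecidableEq V]

lemma IsMatching.insert (hM : IsMatching G M) (hxu : G.Adj x u) (hx : ∀ f ∈ M, x ∉ f)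
    (hu : ∀ f ∈ M, u ∉ f) : IsMatching G (insert s(x, u) M) := by
  have hfree : ∀ f ∈ M, ∀ w ∈ s(x, u), w ∉ f := by
    intro f hf w hw
    rcases Sym2.mem_iff.mp hw with rfl | rfl
    exacts [hx f hf, hu f hf]
  refine ⟨by simpa using Set.insert_subset (G.mem_edgeSet.mpr hxu) hM.1, ?_⟩
  simp only [Finset.forall_mem_insert]
  refine ⟨⟨fun h => absurd rfl h, fun f hf _ w hw => hfree f hf w hw.1 hw.2⟩,
    fun f hf => ⟨fun _ w hw => hfree f hf w hw.2 hw.1, hM.2 f hf⟩⟩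

lemma IsMatching.notMem_of_mem_erase (hM : IsMatching G M) (he : e ∈ M) (hxe : x ∈ e) :
    ∀ f ∈ M.erase e, x ∉ f :=
  fun _ hf hxf => Finset.ne_of_mem_erase hf (hM.eq_of_mem (Finset.mem_of_mem_erase hf) he hxf hxe)

lemma IsMaxMatching.exists_mem_of_adj (hM : IsMaxMatching G M) (hxu : G.Adj x u) :
    (∃ f ∈ M, x ∈ f) ∨ ∃ f ∈ M, u ∈ f := by
  by_contra! h
  have hnot : s(x, u) ∉ M := fun hxu' => h.1 _ hxu' (Sym2.mem_mk_left x u)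
  have hcard := hM.2 _ (hM.1.insert hxu h.1 h.2)
  rw [Finset.card_insert_of_notMem hnot] at hcard
  omega

lemma IsMaxMatching.insert_erase (hM : IsMaxMatching G M) (he : e ∈ M) (hxe : x ∈ e)
    (hxu : G.Adj x u) (hu : ∀ f ∈ M, u ∉ f) : IsMaxMatching G (insert s(x, u) (M.erase e)) := by
  have hu' : ∀ f ∈ M.erase e, u ∉ f := fun f hf => hu f (Finset.mem_of_mem_erase hf)
  have hnot : s(x, u) ∉ M.erase e := fun h => hu' _ h (Sym2.mem_mk_right x u)
  refine ⟨(hM.1.subset (M.erase_subset e)).insert hxu (hM.1.notMem_of_mem_erase he hxe) hu',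
    fun N hN => ?_⟩
  rw [Finset.card_insert_of_notMem hnot, Finset.card_erase_add_one he]
  exact hM.2 N hN

end Matching

lemma MaxMatchable.symm {V : Type*} {G : SimpleGraph V} {u v : V} :
    MaxMatchable G u v → MaxMatchable G v u := by
  rintro ⟨p, M, hp, hM, halt⟩
  exact ⟨p.reverse, M, hp.reverse, hM, by simpa using halt.reverse⟩

section Pendant

variable {V : Type*} [Fintype V] {G : SimpleGraph V} [DecidableRel G.Adj]
  {M : Finset (Sym2 V)} {e f : Sym2 V} {p x y : V}

lemma eq_of_adj_of_degree_eq_one (hp : G.degree p = 1) (hx : G.Adj p x) (hy : G.Adj p y) :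
    x = y :=
  (degree_eq_one_iff_existsUnique_adj.mp hp).unique hx hy

lemma eq_of_mem_edgeSet_of_degree_eq_one (hp : G.degree p = 1) (hpx : G.Adj p x)
    (hf : f ∈ G.edgeSet) (hpf : p ∈ f) : f = s(p, x) := by
  rw [← Sym2.other_spec hpf] at hf ⊢
  rw [eq_of_adj_of_degree_eq_one hp (G.mem_edgeSet.mp hf) hpx]

lemma IsMatching.forall_notMem_of_degree_eq_one (hM : IsMatching G M) (hp : G.degree p = 1)
    (hpx : G.Adj p x) (he : e ∈ M) (hxe : x ∈ e) (hpe : p ∉ e) : ∀ f ∈ M, p ∉ f := by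
  intro f hf hpf
  have hfx : x ∈ f := eq_of_mem_edgeSet_of_degree_eq_one hp hpx (hM.1 hf) hpf ▸
    Sym2.mem_mk_right p x
  exact hpe (hM.eq_of_mem hf he hfx hxe ▸ hpf)

variable [DecidableEq V]

lemma exists_isMaxMatching_mem_of_degree_eq_one (hxp : G.Adj x p) (hp : G.degree p = 1) :
    ∃ M, IsMaxMatching G M ∧ s(x, p) ∈ M := by
  obtain ⟨M, hM⟩ := exists_isMaxMatching G
  have hpair : ∀ f ∈ M, p ∈ f → s(x, p) ∈ M := fun f hf hpf => by
    rwa [eq_of_mem_edgeSet_of_degree_eq_one hp hxp.symm (hM.1.1 hf) hpf, Sym2.eq_swap] at hf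
  rcases hM.exists_mem_of_adj hxp with ⟨f, hf, hxf⟩ | ⟨f, hf, hpf⟩
  · by_cases hpf : p ∈ f
    · exact ⟨M, hM, hpair f hf hpf⟩
    · exact ⟨_, hM.insert_erase hf hxf hxp
        (hM.1.forall_notMem_of_degree_eq_one hp hxp.symm hf hxf hpf),
        Finset.mem_insert_self _ _⟩
  · exact ⟨M, hM, hpair f hf hpf⟩

variable (hG : ∀ v, G.degree v ≠ 1 → ∃ u, G.Adj v u ∧ G.degree u = 1)
include hG

lemma IsMaxMatching.degree_eq_one_of_mem (hM : IsMaxMatching G M) (hxy : s(x, y) ∈ M)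
    (hx : G.degree x ≠ 1) : G.degree y = 1 := by
  by_contra hy
  have hadj : G.Adj x y := hM.1.1 hxy
  obtain ⟨x', hxx', hx'⟩ := hG x hx
  obtain ⟨y', hyy', hy'⟩ := hG y hy
  have hx'y' : x' ≠ y' := by
    rintro rfl
    exact hadj.ne (eq_of_adj_of_degree_eq_one hx' hxx'.symm hyy'.symm)
  have hpendant : ∀ w, G.degree w = 1 → w ∉ s(x, y) := by
    intro w hw hwxy
    rcases Sym2.mem_iff.mp hwxy with rfl | rfl
    exacts [hx hw, hy hw]
  have hx'M := hM.1.forall_notMem_of_degree_eq_one hx' hxx'.symm hxy (Sym2.mem_mk_left x y)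
    (hpendant x' hx')
  have hy'M := hM.1.forall_notMem_of_degree_eq_one hy' hyy'.symm hxy (Sym2.mem_mk_right x y)
    (hpendant y' hy')
  have hM' := hM.insert_erase hxy (Sym2.mem_mk_left x y) hxx' hx'M
  -- after the exchange `y` and its pendant neighbour `y'` are both unmatched
  rcases hM'.exists_mem_of_adj hyy' with ⟨f, hf, hyf⟩ | ⟨f, hf, hy'f⟩
  · rcases Finset.mem_insert.mp hf with rfl | hf
    · rcases Sym2.mem_iff.mp hyf with h | h
      exacts [hadj.ne h.symm, hy (h ▸ hx')]
    · exact hM.1.notMem_of_mem_erase hxy (Sym2.mem_mk_right x y) f hf hyf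
  · rcases Finset.mem_insert.mp hf with rfl | hf
    · rcases Sym2.mem_iff.mp hy'f with h | h
      exacts [hx (h ▸ hy'), hx'y' h.symm]
    · exact hy'M f (Finset.mem_of_mem_erase hf) hy'f

lemma IsMaxMatching.adj_and_degree_eq_one_of_isAltEdgeList (hM : IsMaxMatching G M)
    {v u : V} (hv : G.degree v ≠ 1) {q : G.Walk v u} (hq : q.IsPath)
    (halt : IsAltEdgeList (↑M) q.edges) : G.Adj v u ∧ G.degree u = 1 := by
  cases q with
  | nil => simp [IsAltEdgeList] at halt
  | cons hvw r =>
    rw [Walk.edges_cons] at halt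
    have hw := hM.degree_eq_one_of_mem hG halt.head_mem hv
    cases r with
    | nil => exact ⟨hvw, hw⟩
    | cons hwz r' =>
      -- the pendant vertex `w` can only step back to `v`
      obtain rfl := eq_of_adj_of_degree_eq_one hw hwz hvw.symm
      simp [Walk.cons_isPath_iff] at hq

lemma maxMatchable_iff_adj_and_degree_eq_one {v u : V} (hv : G.degree v ≠ 1) :
    MaxMatchable G v u ↔ G.Adj v u ∧ G.degree u = 1 := by
  constructor
  · rintro ⟨q, M, hq, hM, halt⟩
    exact hM.adj_and_degree_eq_one_of_isAltEdgeList hG hv hq halt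
  · rintro ⟨hvu, hu⟩
    obtain ⟨M, hM, hvuM⟩ := exists_isMaxMatching_mem_of_degree_eq_one hvu hu
    exact ⟨hvu.toWalk, M, hvu.isPath_toWalk, hM, by simpa [IsAltEdgeList] using hvuM⟩

end Pendant

/-- In the group inverse graph of a tree of class 𝕋, the degree of a
non-pendant vertex v equals the number of pendant vertices adjacent to v in T. -/
theorem classT_group_inverse_degree {V : Type*} [Fintype V] [DecidableEq V]
    (T : SimpleGraph V) [DecidableRel T.Adj] (hT : InClassT T)
    (v : V) (hv : T.degree v ≠ 1) :
    ((SimpleGraph.fromRel (MaxMatchable T)).neighborSet v).ncard =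
      pendantNbrs T v := by
  have hnbrs : (SimpleGraph.fromRel (MaxMatchable T)).neighborSet v =
      ↑((T.neighborFinset v).filter fun u => T.degree u = 1) := by
    ext u
    simp only [mem_neighborSet, fromRel_adj, Finset.coe_filter, mem_neighborFinset]
    rw [or_iff_left_of_imp MaxMatchable.symm, maxMatchable_iff_adj_and_degree_eq_one hT.2.2 hv]
    exact and_iff_right_of_imp fun h => h.1.ne
  rw [hnbrs, Set.ncard_coe_finset]
  rfl
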